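/- Let a, b ∈ ℝ and let g(z) = -z³ - 3a²z + b. There exists z ∈ ℝ with g(z) = z and g'(z) = -1 if and only if 4(3a²-1)(3a²+2)² + 27b² = 0. -/

import Mathlib

/-- Characterization of the curve `Per₁(-1)` in the real cubic family: the cubic
`g(z) = -z³ - 3a²z + b` has a real fixed point of multiplier `-1` if and only if
`4(3a²-1)(3a²+2)² + 27b² = 0`. -/
theorem real_cubic_per_one_minus_one (a b : ℝ) :
    (∃ z : ℝ, -z ^ 3 - 3 * a ^ 2 * z + b = z ∧ -3 * z ^ 2 - 3 * a ^ 2 = -1) ↔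
      4 * (3 * a ^ 2 - 1) * (3 * a ^ 2 + 2) ^ 2 + 27 * b ^ 2 = 0 := by
  constructor
  · rintro ⟨z, h1, h2⟩
    have hz2 : z ^ 2 = (1 - 3 * a ^ 2) / 3 := by linarith
    have hz3 : z ^ 3 = z * ((1 - 3 * a ^ 2) / 3) := by
      calc z ^ 3 = z ^ 2 * z := by ring
      _ = z * ((1 - 3 * a ^ 2) / 3) := by rw [hz2]; ring
    have hb : b = z * (2 * (3 * a ^ 2) + 4) / 3 := by
      have := h1; rw [hz3] at this; linarith
    rw [hb]
    linear_combination (12 * (3 * a ^ 2 + 2) ^ 2) * hz2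
  · intro h
    have hne : (2 : ℝ) * (3 * a ^ 2 + 2) ≠ 0 := by positivity
    refine ⟨3 * b / (2 * (3 * a ^ 2 + 2)), ?_, ?_⟩
    · field_simp
      linear_combination (-b) * h
    · field_simp
      linear_combination -h
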